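/- Let C be a neighbour-transitive code (|C| ≥ 2) in the odd graph O_{k+1} = K(2k+1,k) with minimum distance δ ≥ 2, and suppose Aut(C) preserves a partition B = {B₁,…,B_a} of Ω into a blocks each of size b, where ab = 2k+1 and a,b ≥ 2, on which Aut(C) acts transitively. Then there exist integers a₀, a₁, b₁ such that for every α ∈ C the multiset {|α ∩ Bᵢ| : i = 1,…,a} equals {b with multiplicity a₀, b₁ with multiplicity a₁}; i.e. each block is either fully contained in α or meets α in exactly b₁ points. -/

import Mathlib

open Finset

abbrev KVert (Ω : Type*) [DecidableEq Ω] (k : ℕ) := {s : Finset Ω // s.card = k}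

def kneser (Ω : Type*) [DecidableEq Ω] (k : ℕ) : SimpleGraph (KVert Ω k) where
  Adj a b := a ≠ b ∧ Disjoint a.1 b.1
  symm := ⟨fun a b h => ⟨h.1.symm, h.2.symm⟩⟩
  loopless := ⟨fun a h => h.1 rfl⟩

/-- The action of a permutation of `Ω` on the vertices of the Kneser graph. -/
def permV {Ω : Type*} [DecidableEq Ω] {k : ℕ} (g : Equiv.Perm Ω) (a : KVert Ω k) : KVert Ω k :=
  ⟨a.1.map g.toEmbedding, by simp [a.2]⟩

/-- The setwise stabiliser of a code `C` inside `Sym(Ω)`. -/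
def autC {Ω : Type*} [DecidableEq Ω] {k : ℕ} (C : Set (KVert Ω k)) : Set (Equiv.Perm Ω) :=
  {g | (permV g) '' C = C}

/-- `nbrs C i` is `Cᵢ`, the set of vertices at distance exactly `i` from the code `C`. -/
def nbrs {Ω : Type*} [Fintype Ω] [DecidableEq Ω] {k : ℕ} (C : Set (KVert Ω k)) (i : ℕ) :
    Set (KVert Ω k) :=
  {γ | (∃ α ∈ C, (kneser Ω k).dist α γ = i) ∧ ∀ β ∈ C, i ≤ (kneser Ω k).dist β γ}

/-- `G` acts transitively on the set of vertices `S`. -/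
def transOn {Ω : Type*} [DecidableEq Ω] {k : ℕ} (G : Set (Equiv.Perm Ω))
    (S : Set (KVert Ω k)) : Prop :=
  ∀ x ∈ S, ∀ y ∈ S, ∃ g ∈ G, permV g x = y

/-!
Fix a codeword `α`. For `x ∉ α` the `k`-set `Ω \ (α ∪ {x})` is adjacent to `α`, so, as `δ ≥ 2`
and the odd graph is connected, it lies in `C₁`. Its profile `ι` is that of `Ω \ α` with the
entry `|Bᵢ \ α|` of the block `Bᵢ ∋ x` lowered by one. Since `Aut(C)` permutes the blocks and is
transitive on `C₁`, all these profiles coincide, which forces `|Bᵢ \ α|` to be the same for all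
blocks `Bᵢ ⊄ α`. Transitivity on `C` makes `ι(α)` independent of `α`.
-/

open Function

theorem eq_of_cons_eq_of_succ_cons_eq {u v : ℕ} {S T : Multiset ℕ} (h : u ::ₘ S = v ::ₘ T)
    (hsucc : (u + 1) ::ₘ S = (v + 1) ::ₘ T) : u = v := by
  by_contra huv
  have hcount := congrArg (Multiset.count u) h
  have hcount_succ := congrArg (Multiset.count u) hsucc
  simp only [Multiset.count_cons] at hcount hcount_succ
  split_ifs at hcount hcount_succ <;> omega

theorem Multiset.exists_eq_replicate_add_replicate {α : Type*} [DecidableEq α] {s : Multiset α}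
    (u : α) (h : ∀ x ∈ s, ∀ y ∈ s, x ≠ u → y ≠ u → x = y) :
    ∃ m n : ℕ, ∃ v, s = replicate m u + replicate n v := by
  obtain ⟨v, hv⟩ : ∃ v, ∀ y ∈ s.filter (· ≠ u), y = v := by
    rcases Multiset.empty_or_exists_mem (s.filter (· ≠ u)) with hempty | ⟨x, hx⟩
    · exact ⟨u, by simp [hempty]⟩
    · rw [Multiset.mem_filter] at hx
      exact ⟨x, fun y hy => by
        rw [Multiset.mem_filter] at hy
        exact h y hy.1 x hx.1 hy.2 hx.2⟩
  refine ⟨s.count u, (s.filter (· ≠ u)).card, v, ?_⟩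
  rw [← Multiset.filter_eq', ← Multiset.eq_replicate_of_mem hv, Multiset.filter_add_not]

section Kneser

variable {Ω : Type*} [DecidableEq Ω] {k : ℕ}

theorem kneser_adj_of_disjoint (hk : k ≠ 0) {α β : KVert Ω k} (h : Disjoint α.1 β.1) :
    (kneser Ω k).Adj α β := by
  refine ⟨fun hαβ => hk ?_, h⟩
  subst hαβ
  rw [← α.2]
  exact card_eq_zero.mpr (disjoint_self.mp h)

variable [Fintype Ω]

theorem kneser_reachable_of_card_union_le {α β : KVert Ω k}
    (h : k + (α.1 ∪ β.1).card ≤ Fintype.card Ω) : (kneser Ω k).Reachable α β := by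
  rcases eq_or_ne k 0 with rfl | hk
  · obtain rfl : α = β := Subtype.ext ((card_eq_zero.mp α.2).trans (card_eq_zero.mp β.2).symm)
    rfl
  obtain ⟨γ, hγ, hγcard⟩ := exists_subset_card_eq (s := (α.1 ∪ β.1)ᶜ) (n := k)
    (by rw [card_compl]; omega)
  have hdisj : Disjoint (α.1 ∪ β.1) γ := disjoint_compl_right.mono_right hγ
  let γ' : KVert Ω k := ⟨γ, hγcard⟩
  exact (kneser_adj_of_disjoint (β := γ') hk (disjoint_union_left.mp hdisj).1).reachable.trans
    (kneser_adj_of_disjoint (β := γ') hk (disjoint_union_left.mp hdisj).2).symm.reachable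

theorem kneser_preconnected (h : 2 * k < Fintype.card Ω) : (kneser Ω k).Preconnected := by
  intro α β
  induction hn : (α.1 \ β.1).card generalizing α with
  | zero =>
    have hsub : α.1 ⊆ β.1 := sdiff_eq_empty_iff_subset.mp (card_eq_zero.mp hn)
    rw [Subtype.ext (eq_of_subset_of_card_le hsub (by rw [α.2, β.2]))]
  | succ n ih =>
    obtain ⟨x, hx⟩ : (α.1 \ β.1).Nonempty := card_pos.mp (by omega)
    obtain ⟨y, hy⟩ : (β.1 \ α.1).Nonempty :=
      card_pos.mp (by rw [card_sdiff_comm (by rw [α.2, β.2]), hn]; omega)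
    rw [mem_sdiff] at hx hy
    have hcard : (insert y (α.1.erase x)).card = k := by
      rw [card_insert_of_notMem (fun h => hy.2 (mem_of_mem_erase h)),
        card_erase_add_one hx.1, α.2]
    let α' : KVert Ω k := ⟨insert y (α.1.erase x), hcard⟩
    have hunion : α.1 ∪ α'.1 = insert y α.1 := by
      ext z
      simp only [α', mem_union, mem_insert, mem_erase]
      tauto
    have hstep : (kneser Ω k).Reachable α α' :=
      kneser_reachable_of_card_union_le (by rw [hunion, card_insert_of_notMem hy.2, α.2]; omega)
    have hsdiff : α'.1 \ β.1 = (α.1 \ β.1).erase x := by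
      ext z
      simp only [α', mem_sdiff, mem_insert, mem_erase]
      constructor
      · rintro ⟨rfl | hz, hzβ⟩
        exacts [absurd hy.1 hzβ, ⟨hz.1, hz.2, hzβ⟩]
      · rintro ⟨hzx, hzα, hzβ⟩
        exact ⟨Or.inr ⟨hzx, hzα⟩, hzβ⟩
    exact hstep.trans (ih α' (by rw [hsdiff, card_erase_of_mem (mem_sdiff.mpr hx), hn]; rfl))

theorem mem_nbrs_one_of_adj (hconn : (kneser Ω k).Preconnected) {C : Set (KVert Ω k)}
    (hdelta : ∀ α ∈ C, ∀ β ∈ C, ¬ (kneser Ω k).Adj α β) {α γ : KVert Ω k} (hα : α ∈ C)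
    (hadj : (kneser Ω k).Adj α γ) : γ ∈ nbrs C 1 :=
  ⟨⟨α, hα, SimpleGraph.dist_eq_one_iff_adj.mpr hadj⟩, fun β hβ =>
    (hconn β γ).pos_dist_of_ne (by rintro rfl; exact hdelta α hα β hβ hadj)⟩

theorem exists_compl_erase_mem_nbrs_one (hcard : Fintype.card Ω = 2 * k + 1) (hk : k ≠ 0)
    {C : Set (KVert Ω k)} (hdelta : ∀ α ∈ C, ∀ β ∈ C, ¬ (kneser Ω k).Adj α β)
    {α : KVert Ω k} (hα : α ∈ C) {x : Ω} (hx : x ∉ α.1) :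
    ∃ γ ∈ nbrs C 1, γ.1 = α.1ᶜ.erase x := by
  have hcard' : (α.1ᶜ.erase x).card = k := by
    rw [card_erase_of_mem (mem_compl.mpr hx), card_compl, α.2, hcard]
    omega
  refine ⟨⟨_, hcard'⟩, mem_nbrs_one_of_adj (kneser_preconnected (by omega)) hdelta hα
    (kneser_adj_of_disjoint hk ?_), rfl⟩
  exact disjoint_compl_right.mono_right (erase_subset _ _)

end Kneser

section Profile

variable {Ω ι : Type*} [DecidableEq Ω] [Fintype ι] [DecidableEq ι] {B : ι → Finset Ω}

/-- The paper's `ι(s)`. -/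
def intersectionProfile (B : ι → Finset Ω) (s : Finset Ω) : Multiset ℕ :=
  univ.val.map fun i => (s ∩ B i).card

theorem intersectionProfile_map (hne : ∀ i, (B i).Nonempty) (hdisj : Pairwise (Disjoint on B))
    {g : Equiv.Perm Ω} (hg : ∀ i, ∃ j, (B i).map g.toEmbedding = B j) (s : Finset Ω) :
    intersectionProfile B (s.map g.toEmbedding) = intersectionProfile B s := by
  choose σ hσ using hg
  have hσ_inj : σ.Injective := fun i j hij => by
    by_contra hne'
    have hBij : B i = B j := map_injective g.toEmbedding (by rw [hσ, hσ, hij])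
    have hdisj_ij := hdisj hne'
    rw [onFun, hBij] at hdisj_ij
    exact (hne j).ne_empty (disjoint_self.mp hdisj_ij)
  let e := Equiv.ofBijective σ (Finite.injective_iff_bijective.mp hσ_inj)
  calc intersectionProfile B (s.map g.toEmbedding)
      = (univ.val.map e).map fun i => (s.map g.toEmbedding ∩ B i).card := by
        rw [Multiset.map_univ_val_equiv]
        rfl
    _ = intersectionProfile B s := by
        rw [Multiset.map_map]
        refine Multiset.map_congr rfl fun i _ => ?_
        change (s.map g.toEmbedding ∩ B (σ i)).card = _
        rw [← hσ, ← map_inter, card_map]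

theorem intersectionProfile_eq_cons (s : Finset Ω) (i : ι) :
    intersectionProfile B s =
      (s ∩ B i).card ::ₘ (univ.val.erase i).map fun l => (s ∩ B l).card := by
  rw [intersectionProfile, ← Multiset.map_cons (fun l => (s ∩ B l).card),
    Multiset.cons_erase (mem_univ_val i)]

theorem intersectionProfile_erase (hdisj : Pairwise (Disjoint on B)) {x : Ω} {i : ι}
    (hx : x ∈ B i) (s : Finset Ω) :
    intersectionProfile B (s.erase x) =
      (s.erase x ∩ B i).card ::ₘ (univ.val.erase i).map fun l => (s ∩ B l).card := by
  rw [intersectionProfile_eq_cons _ i]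
  refine congrArg _ (Multiset.map_congr rfl fun l hl => ?_)
  have hli : l ≠ i := ((Multiset.Nodup.mem_erase_iff univ.nodup).mp hl).1
  rw [erase_inter, erase_eq_of_notMem
    fun h => disjoint_left.mp (hdisj hli.symm) hx (mem_inter.mp h).2]

theorem card_inter_eq_of_intersectionProfile_erase_eq (hdisj : Pairwise (Disjoint on B))
    {s : Finset Ω} {x y : Ω} {i j : ι} (hx : x ∈ s) (hxi : x ∈ B i) (hy : y ∈ s) (hyj : y ∈ B j)
    (h : intersectionProfile B (s.erase x) = intersectionProfile B (s.erase y)) :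
    (s ∩ B i).card = (s ∩ B j).card := by
  have hsucc : ∀ {z l}, z ∈ s → z ∈ B l → (s.erase z ∩ B l).card + 1 = (s ∩ B l).card :=
    fun hz hzl => by rw [erase_inter, card_erase_add_one (mem_inter.mpr ⟨hz, hzl⟩)]
  rw [intersectionProfile_erase hdisj hxi, intersectionProfile_erase hdisj hyj] at h
  have hs := (intersectionProfile_eq_cons (B := B) s i).symm.trans
    (intersectionProfile_eq_cons s j)
  rw [← hsucc hx hxi, ← hsucc hy hyj] at hs ⊢
  rw [eq_of_cons_eq_of_succ_cons_eq h hs]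

theorem intersectionProfile_eq_of_transOn {k : ℕ} (hne : ∀ i, (B i).Nonempty)
    (hdisj : Pairwise (Disjoint on B)) {G : Set (Equiv.Perm Ω)} {S : Set (KVert Ω k)}
    (hS : transOn G S) (hG : ∀ g ∈ G, ∀ i, ∃ j, (B i).map g.toEmbedding = B j)
    {α β : KVert Ω k} (hα : α ∈ S) (hβ : β ∈ S) :
    intersectionProfile B α.1 = intersectionProfile B β.1 := by
  obtain ⟨g, hg, rfl⟩ := hS α hα β hβ
  exact (intersectionProfile_map hne hdisj (hG g hg) α.1).symm

end Profile

theorem card_inter_block_eq_of_not_subset {Ω ι : Type*} [Fintype Ω] [DecidableEq Ω]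
    [Fintype ι] [DecidableEq ι] {k b : ℕ} {B : ι → Finset Ω}
    (hcard : Fintype.card Ω = 2 * k + 1) (hk : k ≠ 0) (hBcard : ∀ i, (B i).card = b)
    (hne : ∀ i, (B i).Nonempty) (hdisj : Pairwise (Disjoint on B)) {C : Set (KVert Ω k)}
    (h1 : transOn (autC C) (nbrs C 1)) (hdelta : ∀ α ∈ C, ∀ β ∈ C, ¬ (kneser Ω k).Adj α β)
    (hpres : ∀ g ∈ autC C, ∀ i, ∃ j, (B i).map g.toEmbedding = B j)
    {α : KVert Ω k} (hα : α ∈ C) {i j : ι} (hi : ¬ B i ⊆ α.1) (hj : ¬ B j ⊆ α.1) :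
    (α.1 ∩ B i).card = (α.1 ∩ B j).card := by
  obtain ⟨x, hxi, hxα⟩ := not_subset.mp hi
  obtain ⟨y, hyj, hyα⟩ := not_subset.mp hj
  obtain ⟨γx, hγx, hγx_eq⟩ := exists_compl_erase_mem_nbrs_one hcard hk hdelta hα hxα
  obtain ⟨γy, hγy, hγy_eq⟩ := exists_compl_erase_mem_nbrs_one hcard hk hdelta hα hyα
  have hprofile := intersectionProfile_eq_of_transOn hne hdisj h1 hpres hγx hγy
  rw [hγx_eq, hγy_eq] at hprofile
  have hcompl := card_inter_eq_of_intersectionProfile_erase_eq hdisj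
    (mem_compl.mpr hxα) hxi (mem_compl.mpr hyα) hyj hprofile
  have hsplit : ∀ l, (α.1 ∩ B l).card + (α.1ᶜ ∩ B l).card = b := fun l => by
    rw [← hBcard l, ← card_inter_add_card_sdiff (B l) α.1, sdiff_eq_inter_compl,
      inter_comm α.1, inter_comm α.1ᶜ]
  have := hsplit i
  have := hsplit j
  omega

theorem stmt8_general {Ω : Type*} [Fintype Ω] [DecidableEq Ω] {k a b : ℕ}
    (hcard : Fintype.card Ω = 2 * k + 1)
    (hb : 2 ≤ b)
    (B : Fin a → Finset Ω) (hBcard : ∀ i, (B i).card = b)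
    (hBdisj : ∀ i j, i ≠ j → Disjoint (B i) (B j))
    (C : Set (KVert Ω k)) (hC : C.Nontrivial)
    (h0 : transOn (autC C) C) (h1 : transOn (autC C) (nbrs C 1))
    (hdelta : ∀ α ∈ C, ∀ β ∈ C, ¬ (kneser Ω k).Adj α β)
    (hpres : ∀ g ∈ autC C, ∀ i, ∃ j, (B i).map g.toEmbedding = B j) :
    ∃ a₀ a₁ b₁ : ℕ, ∀ α ∈ C,
      (Finset.univ.val.map fun i => (α.1 ∩ B i).card) =
        Multiset.replicate a₀ b + Multiset.replicate a₁ b₁ := by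
  obtain ⟨α₀, hα₀, β₀, -, hαβ⟩ := hC
  have hk : k ≠ 0 := by
    rintro rfl
    exact hαβ (Subtype.ext (by rw [card_eq_zero.mp α₀.2, card_eq_zero.mp β₀.2]))
  have hne : ∀ i, (B i).Nonempty := fun i => card_pos.mp (by rw [hBcard i]; omega)
  have hfull : ∀ i, B i ⊆ α₀.1 → (α₀.1 ∩ B i).card = b := fun i h => by
    rw [inter_eq_right.mpr h, hBcard]
  obtain ⟨a₀, a₁, b₁, hα₀_profile⟩ :=
    Multiset.exists_eq_replicate_add_replicate (s := intersectionProfile B α₀.1) b (by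
      simp only [intersectionProfile, Multiset.mem_map]
      rintro _ ⟨i, -, rfl⟩ _ ⟨j, -, rfl⟩ hi hj
      exact card_inter_block_eq_of_not_subset hcard hk hBcard hne hBdisj h1 hdelta hpres hα₀
        (mt (hfull i) hi) (mt (hfull j) hj))
  exact ⟨a₀, a₁, b₁, fun α hα =>
    (intersectionProfile_eq_of_transOn hne hBdisj h0 hpres hα hα₀).trans hα₀_profile⟩

/-- imprimitive case, minimum distance at least 2: every codeword meets
each block of the invariant partition either fully or in a constant number `b₁` of
points, with constant multiplicities `a₀`, `a₁`. -/
theorem stmt8 {Ω : Type*} [Fintype Ω] [DecidableEq Ω] {k a b : ℕ}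
    (hcard : Fintype.card Ω = 2 * k + 1)
    (ha : 2 ≤ a) (hb : 2 ≤ b) (hab : a * b = 2 * k + 1)
    (B : Fin a → Finset Ω) (hBcard : ∀ i, (B i).card = b)
    (hBdisj : ∀ i j, i ≠ j → Disjoint (B i) (B j))
    (hBcover : Finset.univ.biUnion B = Finset.univ)
    (C : Set (KVert Ω k)) (hC : C.Nontrivial)
    (h0 : transOn (autC C) C) (h1 : transOn (autC C) (nbrs C 1))
    (hdelta : ∀ α ∈ C, ∀ β ∈ C, ¬ (kneser Ω k).Adj α β)
    (hpres : ∀ g ∈ autC C, ∀ i, ∃ j, (B i).map g.toEmbedding = B j)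
    (hblocktrans : ∀ i j, ∃ g ∈ autC C, (B i).map g.toEmbedding = B j) :
    ∃ a₀ a₁ b₁ : ℕ, ∀ α ∈ C,
      (Finset.univ.val.map fun i => (α.1 ∩ B i).card) =
        Multiset.replicate a₀ b + Multiset.replicate a₁ b₁ :=
  stmt8_general hcard hb B hBcard hBdisj C hC h0 h1 hdelta hpres
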